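/- arXiv:1808.06091 — 5 statements merged into one kernel-verified Lean document; each statement's English description precedes it below -/
import Mathlib

section
/- Let T be a planar or toric trinity and T0 a planar trinity, and form the connected sum T#T0 by gluing T0 into a chosen black triangle of T. Then the states of T#T0 are in natural bijection with pairs (s, s') where s is a state of T and s' is a state of T0; moreover there is a clockwise move from (s, s') to (t, t') if and only if either s' = t' and there is a clockwise move from s to t in T, or s = t and there is a clockwise move from s' to t' in T0. In particular, the state transition graph of T#T0 is the product of the state transition graphs of T and T0. -/
/-!  Combinatorial trinities, Tutte matchings (states), and clock moves,
following Hine and Kálmán, "Clock theorems for triangulated surfaces".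

A trinity is encoded combinatorially: `Vertex` is the set of vertices, properly
colored by `vcol` with colors `Fin 3` (0 = red, 1 = green, 2 = blue); `White`
and `Black` are the sets of white and black triangles.  Each triangle has one
vertex of each color (`wvert`, `bvert`) and one edge of each color (the edge of
color `c` being opposite the vertex of color `c`); across its edge of color `c`
a white triangle `w` meets the black triangle `wadj w c`, and a black triangle
`b` meets the white triangle `badj b c`.  The two triangles sharing an edge of
color `c` share their vertices of the other two colors (`bvert_wadj`).
A planar trinity carries a distinguished outer white triangle (`outer = some o`);
for a toric trinity `outer = none`. -/

structure Trinity where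
  Vertex : Type
  White : Type
  Black : Type
  [vertexFintype : Fintype Vertex]
  [whiteFintype : Fintype White]
  [blackFintype : Fintype Black]
  [vertexDecEq : DecidableEq Vertex]
  [whiteDecEq : DecidableEq White]
  [blackDecEq : DecidableEq Black]
  outer : Option White
  vcol : Vertex → Fin 3
  wvert : White → Fin 3 → Vertex
  bvert : Black → Fin 3 → Vertex
  wadj : White → Fin 3 → Black
  badj : Black → Fin 3 → White
  wvert_col : ∀ w c, vcol (wvert w c) = c
  bvert_col : ∀ b c, vcol (bvert b c) = c
  badj_wadj : ∀ w c, badj (wadj w c) c = w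
  wadj_badj : ∀ b c, wadj (badj b c) c = b
  bvert_wadj : ∀ w c c', c' ≠ c → bvert (wadj w c) c' = wvert w c'

attribute [instance] Trinity.vertexFintype Trinity.whiteFintype Trinity.blackFintype
  Trinity.vertexDecEq Trinity.whiteDecEq Trinity.blackDecEq

namespace Trinity

variable (T : Trinity)

/-- `w` is the outer white triangle. -/
def IsOuter (w : T.White) : Prop := T.outer = some w

instance : DecidablePred T.IsOuter := fun w => decidable_of_iff (T.outer = some w) Iff.rfl

/-- `v` is a root, i.e. a vertex of the outer white triangle (planar case). -/
def IsRoot (v : T.Vertex) : Prop := ∃ w, T.IsOuter w ∧ ∃ c, v = T.wvert w c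

/-- A Tutte matching (state): a perfect matching between the non-outer white
triangles and incident non-root vertices.  (For a toric trinity, `IsOuter` and
`IsRoot` are empty conditions, so this is a perfect matching between all white
triangles and all vertices.)  The value on the outer white triangle, if any, is
irrelevant and is normalized by `outer_spec`. -/
structure State where
  toFun : T.White → T.Vertex
  incident : ∀ w, ∃ c, toFun w = T.wvert w c
  injOn : ∀ w w', ¬ T.IsOuter w → ¬ T.IsOuter w' → toFun w = toFun w' → w = w'
  not_root : ∀ w, ¬ T.IsOuter w → ¬ T.IsRoot (toFun w)
  surj : ∀ v, ¬ T.IsRoot v → ∃ w, ¬ T.IsOuter w ∧ toFun w = v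
  outer_spec : ∀ w, T.IsOuter w → toFun w = T.wvert w 0

namespace State

variable {T}

/-- The black triangle through which the arrow representing the match of the
white triangle `w` passes: the arrow of the match `(w, s w)` crosses the edge
of `w` opposite the matched vertex `s w` (the edge of color `vcol (s w)`). -/
def arrowBlack (s : T.State) (w : T.White) : T.Black := T.wadj w (T.vcol (s.toFun w))

/-- The black triangle `b` is empty in the state `s`: no arrow passes through it. -/
def EmptyAt (s : T.State) (b : T.Black) : Prop :=
  ∀ w, ¬ T.IsOuter w → s.arrowBlack w ≠ b

/-- `b` is a clockwise empty black triangle of `s`:  it is empty and its three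
vertices are matched with the three adjacent white triangles in the clockwise
rotational pattern. -/
def IsCW (s : T.State) (b : T.Black) : Prop :=
  s.EmptyAt b ∧ ∀ c, s.toFun (T.badj b c) = T.bvert b (c + 1)

/-- `b` is a counter-clockwise empty black triangle of `s`. -/
def IsCCW (s : T.State) (b : T.Black) : Prop :=
  s.EmptyAt b ∧ ∀ c, s.toFun (T.badj b c) = T.bvert b (c + 2)

end State

/-- The basic clockwise move (clock move) about the empty black triangle `b`,
turning it from clockwise to counter-clockwise: `t` is obtained from `s` by
changing `b`. -/
def CWMoveAt (s t : T.State) (b : T.Black) : Prop :=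
  s.IsCW b ∧ (∀ c, t.toFun (T.badj b c) = T.bvert b (c + 2)) ∧
    ∀ w, (∀ c, w ≠ T.badj b c) → t.toFun w = s.toFun w

/-- A walk in the state transition graph, recording for each step the black
triangle about which the move is performed and the direction of the move
(`true` = clockwise, `false` = counter-clockwise). -/
inductive Walk : T.State → List (T.Black × Bool) → T.State → Prop
  | nil (s : T.State) : Walk s [] s
  | cw {s t u : T.State} {b : T.Black} {l : List (T.Black × Bool)} :
      T.CWMoveAt s t b → Walk t l u → Walk s ((b, true) :: l) u
  | ccw {s t u : T.State} {b : T.Black} {l : List (T.Black × Bool)} :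
      T.CWMoveAt t s b → Walk t l u → Walk s ((b, false) :: l) u

/-- Two states lie in the same connected component of the state transition
graph. -/
def Reaches (s t : T.State) : Prop := ∃ l, T.Walk s l t

/-- A walk consisting of clockwise moves only, about the listed black triangles. -/
def CWWalk (s : T.State) (l : List T.Black) (t : T.State) : Prop :=
  T.Walk s (l.map fun b => (b, true)) t

/-- A state is recurrent if some non-empty sequence of clockwise moves starts
and ends at it. -/
def Recurrent (s : T.State) : Prop := ∃ l : List T.Black, l ≠ [] ∧ T.CWWalk s l s

/-- `s` belongs to an acyclic component of the state transition graph: no state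
in its component is recurrent. -/
def InAcyclic (s : T.State) : Prop := ∀ t, T.Reaches s t → ¬ T.Recurrent t

/-- Two white triangles sharing an adjacent black triangle. -/
def WAdj (w w' : T.White) : Prop := ∃ c c', T.wadj w c = T.wadj w' c'

/-- Rotation (by one step, in the direction induced by the orientation) of the
white triangles around the vertex `v`. -/
def rotAt (v : T.Vertex) (w : T.White) : T.White :=
  T.badj (T.wadj w (T.vcol v + 1)) (T.vcol v + 2)

/-- The combinatorial data encode a closed connected oriented surface: the
triangles form a connected complex and the link of every vertex is a single
cycle of triangles. -/
def Surface : Prop :=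
  (∀ w w' : T.White, Relation.ReflTransGen T.WAdj w w') ∧
  ∀ (v : T.Vertex) (w w' : T.White), T.wvert w (T.vcol v) = v → T.wvert w' (T.vcol v) = v →
    ∃ k : ℕ, (T.rotAt v)^[k] w = w'

/-- A planar trinity: a trinity on the sphere (Euler characteristic 2) with a
distinguished outer white triangle. -/
def Planar : Prop :=
  T.Surface ∧ T.outer.isSome ∧ Fintype.card T.Vertex = Fintype.card T.White + 2

/-- A toric trinity: a trinity on the torus (Euler characteristic 0), with all
triangles and vertices taking part in matchings. -/
def Toric : Prop :=
  T.Surface ∧ T.outer = none ∧ Fintype.card T.Vertex = Fintype.card T.White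

/-- The configuration of a general clock move: three white triangles `W 0, W 1,
W 2` and three vertices `u 0, u 1, u 2` (one of each color) such that `W c`
contains the vertices `u c'` for both colors `c' ≠ c`; the three edges of
colors `c` of the triangles `W c` then form a closed triangle of edges through
the vertices `u`, bounding a disk on the side opposite to the whites.
(For the boundary of a black triangle `b` this recovers `W = T.badj b`,
`u = T.bvert b`.) -/
def CombConfig (W : Fin 3 → T.White) (u : Fin 3 → T.Vertex) : Prop :=
  ∀ c c' : Fin 3, c' ≠ c → T.wvert (W c) c' = u c'

/-- A general clockwise move from `s` to `t`: about some clock-move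
configuration whose three (non-outer) white triangles are matched with its
three vertices, the matching is switched from the clockwise pattern to the
counter-clockwise one, all other matches being kept. -/
def CWMove (s t : T.State) : Prop :=
  ∃ (W : Fin 3 → T.White) (u : Fin 3 → T.Vertex),
    T.CombConfig W u ∧ (∀ c, ¬ T.IsOuter (W c)) ∧
    (∀ c, s.toFun (W c) = u (c + 1)) ∧ (∀ c, t.toFun (W c) = u (c + 2)) ∧
    ∀ w, (∀ c, w ≠ W c) → t.toFun w = s.toFun w

/-- `P` exhibits the closed triangle of edges determined by the clock-move
configuration `W` as separating: `P` is a two-coloring of the triangles which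
changes value exactly across the three edges of the configuration, the white
triangles `W c` being on the `P`-side. -/
def ConfigCut (W : Fin 3 → T.White) (P : T.White ⊕ T.Black → Prop) : Prop :=
  (∀ (w : T.White) (c : Fin 3), (∀ c₀, ¬ (w = W c₀ ∧ c = c₀)) →
    (P (Sum.inl w) ↔ P (Sum.inr (T.wadj w c)))) ∧
  (∀ c, P (Sum.inl (W c))) ∧ (∀ c, ¬ P (Sum.inr (T.wadj (W c) c)))

/-- A trinity is irreducible if it is not the trinity `F` with a single black
and a single white triangle, and it is not a nontrivial connected sum; i.e.
every separating closed triangle of edges cuts off a single triangle. -/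
def Irreducible : Prop :=
  1 < Fintype.card T.White ∧
  ∀ (W : Fin 3 → T.White) (u : Fin 3 → T.Vertex) (P : T.White ⊕ T.Black → Prop),
    T.CombConfig W u → T.ConfigCut W P →
      (∃ b : T.Black, ∀ x, ¬ P x ↔ x = Sum.inr b) ∨
      (∃ w : T.White, ∀ x, P x ↔ x = Sum.inl w)

/-! ### The directed dual graphs `G_X^*`

For a color `X`, the vertices of the directed graph `G_X^*` are the vertices of
the trinity of color `X` and its directed edges are in natural bijection with
the white triangles: the white triangle `w` corresponds to the dual edge of its
edge of color `X`, directed from the vertex of color `X` of the adjacent black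
triangle `wadj w X` (its tail) to the vertex of color `X` of `w` (its head).
The arrows of a state pointing to vertices of color `X` are edges of `G_X^*`. -/

/-- The head of the edge of `G_X^*` corresponding to the white triangle `w`. -/
def head (X : Fin 3) (w : T.White) : T.Vertex := T.wvert w X

/-- The tail of the edge of `G_X^*` corresponding to the white triangle `w`. -/
def tail (X : Fin 3) (w : T.White) : T.Vertex := T.bvert (T.wadj w X) X

/-- One-step reachability in `G_X^*` along edges from the set `A`. -/
def ARel (X : Fin 3) (A : Finset T.White) (a b : T.Vertex) : Prop :=
  ∃ w ∈ A, T.tail X w = a ∧ T.head X w = b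

/-- `A` is a spanning arborescence of `G_X^*`, rooted at the root of color `X`
(the vertex of color `X` of the outer triangle `o`): a spanning tree all of
whose edges point away from the root. -/
def IsArborescence (X : Fin 3) (o : T.White) (A : Finset T.White) : Prop :=
  (∀ w ∈ A, T.head X w ≠ T.wvert o X) ∧
  (∀ v : T.Vertex, T.vcol v = X → v ≠ T.wvert o X → ∃! w, w ∈ A ∧ T.head X w = v) ∧
  (∀ v : T.Vertex, T.vcol v = X → Relation.ReflTransGen (T.ARel X A) (T.wvert o X) v)

/-- One step of the tour tracing (counter-clockwise) the boundary of a small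
neighborhood of the spanning tree `A` in `G_X^*`.  A position of the tour is a
dart `(w, d)`: the edge `w` of `G_X^*` together with a direction (`true`:
towards the head, `false`: towards the tail).  From the end of the dart one
rotates to the next edge-end around the vertex; if that edge belongs to `A` it
is traversed away from the vertex, and otherwise its end is crossed (recorded
by bouncing back towards the vertex). -/
def tourStep (X : Fin 3) (A : Finset T.White) : T.White × Bool → T.White × Bool :=
  fun p =>
    if p.2 then
      let w' := T.badj (T.wadj p.1 (X + 1)) X
      (w', decide (w' ∈ A))
    else
      let w' := T.badj (T.wadj p.1 X) (X + 2)
      (w', decide (w' ∉ A))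

/-- The position of the edge `w` of `G_X^*` in the ordering `<_A` determined by
the spanning arborescence `A`: the first time the boundary tour of a
neighborhood of `A` (started on the outer white triangle `o`, i.e. at the dart
arriving at the root through `o`) travels along `w` (if `w ∈ A`) or crosses an
end of `w` (if `w ∉ A`). -/
noncomputable def ordIdx (X : Fin 3) (o : T.White) (A : Finset T.White) (w : T.White) : ℕ :=
  sInf {k : ℕ | ((T.tourStep X A)^[k] (o, true)).1 = w}

/-- `A` is the clocked arborescence of `G_X^*`: the spanning arborescence such
that for every non-root vertex `y` of color `X`, the edge of `A` pointing to
`y` is smallest, with respect to the ordering `<_A`, among all edges of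
`G_X^*` terminating at `y`. -/
def IsClocked (X : Fin 3) (o : T.White) (A : Finset T.White) : Prop :=
  T.IsArborescence X o A ∧
    ∀ w ∈ A, ∀ w' : T.White, w' ≠ w → T.head X w' = T.head X w →
      T.ordIdx X o A w < T.ordIdx X o A w'

/-! ### Wreaths (toric trinities) -/

/-- A nonempty set `C` of edges of `G_R^*` forming a single (directed) cycle:
at every red vertex the in-degree and out-degree in `C` agree and are at most
one, and `C` is connected. -/
def IsDirCycle (C : Finset T.White) : Prop :=
  C.Nonempty ∧
  (∀ v : T.Vertex, T.vcol v = 0 →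
    (C.filter fun w => T.head 0 w = v).card = (C.filter fun w => T.tail 0 w = v).card ∧
    (C.filter fun w => T.head 0 w = v).card ≤ 1) ∧
  ∀ w ∈ C, ∀ w' ∈ C,
    Relation.ReflTransGen (fun a b => a ∈ C ∧ b ∈ C ∧ T.head 0 a = T.tail 0 b) w w'

/-- The cycle `C` of edges of `G_R^*` separates the surface: the faces of
`G_R^*` (which correspond to the green and blue vertices of the trinity) can be
two-colored so that the two faces adjacent along an edge of `G_R^*` (namely the
faces of the green and the blue endpoint of the crossed red edge) get the same
color exactly when the edge does not belong to `C`. -/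
def SeparatingSet (C : Finset T.White) : Prop :=
  ∃ P : T.Vertex → Prop,
    (∀ w : T.White, w ∉ C → (P (T.wvert w 1) ↔ P (T.wvert w 2))) ∧
    ∀ w ∈ C, ¬ (P (T.wvert w 1) ↔ P (T.wvert w 2))

/-- A wreath: a set `W` of edges of the directed dual graph `G_R^*` such that
every red vertex has exactly one edge of `W` pointing to it and the edges of
`W` form no separating cycle. -/
def IsWreath (W : Finset T.White) : Prop :=
  (∀ v : T.Vertex, T.vcol v = 0 → ∃! w, w ∈ W ∧ T.head 0 w = v) ∧
  ∀ C ⊆ W, T.IsDirCycle C → ¬ T.SeparatingSet C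

end Trinity

/-! In a state of `T # T0`, the white triangles of `T` are matched to vertices of `T` by
incidence. The non-root vertices of `T0` can only be matched to the inner white triangles of
`T0`, and by Euler's formula there are exactly as many of those; so they use up these triangles,
and the state splits into a state of `T` and a state of `T0`. A move configuration cannot
straddle the seam, because the vertex matched to a white triangle of `T0` is not a vertex of `T`;
so every move of `T # T0` is a move of one summand. -/

namespace Trinity

section

variable {T : Trinity}

theorem wvert_injective (w : T.White) : Function.Injective (T.wvert w) :=
  Function.LeftInverse.injective (T.wvert_col w)

theorem bvert_injective (b : T.Black) : Function.Injective (T.bvert b) :=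
  Function.LeftInverse.injective (T.bvert_col b)

theorem State.wvert_vcol_toFun (s : T.State) (w : T.White) :
    T.wvert w (T.vcol (s.toFun w)) = s.toFun w := by
  obtain ⟨c, hc⟩ := s.incident w
  rw [hc, T.wvert_col]

theorem State.ext_of_not_isOuter {s t : T.State}
    (hst : ∀ w, ¬ T.IsOuter w → s.toFun w = t.toFun w) : s = t := by
  have htoFun : s.toFun = t.toFun := funext fun w => by
    by_cases hw : T.IsOuter w
    · rw [s.outer_spec w hw, t.outer_spec w hw]
    · exact hst w hw
  cases s; cases t; cases htoFun; rfl

theorem State.ext_iff {s t : T.State} : s = t ↔ ∀ w, s.toFun w = t.toFun w :=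
  ⟨fun h _ => h ▸ rfl, fun h => State.ext_of_not_isOuter fun w _ => h w⟩

theorem CombConfig.eq_wvert {W : Fin 3 → T.White} {u : Fin 3 → T.Vertex}
    (h : T.CombConfig W u) (c : Fin 3) : u c = T.wvert (W (c + 1)) c :=
  (h (c + 1) c (by revert c; decide)).symm

def CWMoveOn (s t : T.State) (W : Fin 3 → T.White) (u : Fin 3 → T.Vertex) : Prop :=
  T.CombConfig W u ∧ (∀ c, ¬ T.IsOuter (W c)) ∧
    (∀ c, s.toFun (W c) = u (c + 1)) ∧ (∀ c, t.toFun (W c) = u (c + 2)) ∧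
    ∀ w, (∀ c, w ≠ W c) → t.toFun w = s.toFun w

theorem cwMove_iff_exists_cwMoveOn {s t : T.State} :
    T.CWMove s t ↔ ∃ W u, T.CWMoveOn s t W u :=
  Iff.rfl

section Outer

variable {o : T.White} (ho : T.outer = some o)
include ho

theorem isOuter_iff_eq {w : T.White} : T.IsOuter w ↔ w = o := by
  rw [IsOuter, ho, Option.some_inj, eq_comm]

theorem not_isOuter_of_ne {w : T.White} (hw : w ≠ o) : ¬ T.IsOuter w :=
  (isOuter_iff_eq ho).not.2 hw

theorem ne_of_not_isOuter {w : T.White} (hw : ¬ T.IsOuter w) : w ≠ o :=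
  (isOuter_iff_eq ho).not.1 hw

theorem isRoot_iff_exists_wvert {v : T.Vertex} : T.IsRoot v ↔ ∃ c, v = T.wvert o c := by
  simp only [IsRoot, isOuter_iff_eq ho, exists_eq_left]

theorem State.ext_iff_of_ne_outer {s t : T.State} :
    s = t ↔ ∀ w, w ≠ o → s.toFun w = t.toFun w :=
  ⟨fun h _ _ => h ▸ rfl,
    fun h => State.ext_of_not_isOuter fun w hw => h w (ne_of_not_isOuter ho hw)⟩

theorem State.forall_toFun_eq_iff_of_ne_outer {s t : T.State} {P : T.White → Prop} :
    (∀ w, P w → s.toFun w = t.toFun w) ↔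
      ∀ w, w ≠ o → P w → s.toFun w = t.toFun w := by
  refine ⟨fun h w _ => h w, fun h w hw => ?_⟩
  by_cases hwo : w = o
  · rw [s.outer_spec w ((isOuter_iff_eq ho).2 hwo), t.outer_spec w ((isOuter_iff_eq ho).2 hwo)]
  · exact h w hwo hw

theorem card_isRoot : Nat.card {v // T.IsRoot v} = 3 := by
  rw [← Nat.card_fin 3, Nat.card_congr (Equiv.ofInjective _ (wvert_injective o))]
  refine Nat.card_congr (Equiv.subtypeEquivRight fun v => ?_)
  rw [isRoot_iff_exists_wvert ho, Set.mem_range]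
  exact exists_congr fun c => eq_comm

theorem card_not_isRoot (hT : T.Planar) :
    Nat.card {v // ¬ T.IsRoot v} = Nat.card {w // w ≠ o} := by
  classical
  have hroot := card_isRoot ho
  simp only [Nat.card_eq_fintype_card] at hroot ⊢
  rw [Fintype.card_subtype_compl, Fintype.card_subtype_compl, hroot,
    Fintype.card_subtype_eq, hT.2.2]
  omega

end Outer

end

/-- The gluing data exhibiting `S` as the connected sum `T # T0`, where `T0` minus its outer
triangle `o0` replaces the black triangle `b0` of `T`. -/
structure ConnectedSum (T T0 S : Trinity) (b0 : T.Black) (o0 : T0.White) where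
  eW : T.White ⊕ {w : T0.White // w ≠ o0} ≃ S.White
  eV : T.Vertex ⊕ {v : T0.Vertex // ¬ T0.IsRoot v} ≃ S.Vertex
  θ : T0.Vertex → S.Vertex
  outer_eq_some : T0.outer = some o0
  outer_eq_map : S.outer = T.outer.map fun w => eW (.inl w)
  θ_wvert_outer : ∀ c, θ (T0.wvert o0 c) = eV (.inl (T.bvert b0 c))
  θ_of_not_isRoot : ∀ v (h : ¬ T0.IsRoot v), θ v = eV (.inr ⟨v, h⟩)
  wvert_inl : ∀ w c, S.wvert (eW (.inl w)) c = eV (.inl (T.wvert w c))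
  wvert_inr : ∀ (p : {w : T0.White // w ≠ o0}) c, S.wvert (eW (.inr p)) c = θ (T0.wvert p c)

namespace ConnectedSum

variable {T T0 S : Trinity} {b0 : T.Black} {o0 : T0.White} (G : ConnectedSum T T0 S b0 o0)

theorem isOuter_iff {w : S.White} :
    S.IsOuter w ↔ ∃ w', T.IsOuter w' ∧ G.eW (.inl w') = w := by
  rw [IsOuter, G.outer_eq_map, Option.map_eq_some_iff]
  rfl

@[simp]
theorem isOuter_inl_iff {w : T.White} : S.IsOuter (G.eW (.inl w)) ↔ T.IsOuter w := by
  rw [G.isOuter_iff]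
  simp

@[simp]
theorem not_isOuter_inr (p : {w : T0.White // w ≠ o0}) : ¬ S.IsOuter (G.eW (.inr p)) := by
  rw [G.isOuter_iff]
  simp

theorem isRoot_iff {v : S.Vertex} : S.IsRoot v ↔ ∃ u, T.IsRoot u ∧ G.eV (.inl u) = v := by
  constructor
  · rintro ⟨_, hwS, c, rfl⟩
    obtain ⟨w, hw, rfl⟩ := G.isOuter_iff.1 hwS
    exact ⟨_, ⟨w, hw, c, rfl⟩, (G.wvert_inl w c).symm⟩
  · rintro ⟨_, ⟨w, hw, c, rfl⟩, rfl⟩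
    exact ⟨_, G.isOuter_inl_iff.2 hw, c, (G.wvert_inl w c).symm⟩

@[simp]
theorem isRoot_inl_iff {u : T.Vertex} : S.IsRoot (G.eV (.inl u)) ↔ T.IsRoot u := by
  rw [G.isRoot_iff]
  simp

@[simp]
theorem not_isRoot_inr (x : {v : T0.Vertex // ¬ T0.IsRoot v}) : ¬ S.IsRoot (G.eV (.inr x)) := by
  rw [G.isRoot_iff]
  simp

theorem θ_injective : Function.Injective G.θ := by
  have hroot (v) := isRoot_iff_exists_wvert G.outer_eq_some (v := v)
  intro v v' h
  by_cases hv : T0.IsRoot v <;> by_cases hv' : T0.IsRoot v'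
  · obtain ⟨c, rfl⟩ := (hroot _).1 hv
    obtain ⟨c', rfl⟩ := (hroot _).1 hv'
    simp only [θ_wvert_outer, EmbeddingLike.apply_eq_iff_eq, Sum.inl.injEq] at h
    rw [bvert_injective b0 h]
  · obtain ⟨c, rfl⟩ := (hroot _).1 hv
    simp [θ_wvert_outer, G.θ_of_not_isRoot v' hv'] at h
  · obtain ⟨c', rfl⟩ := (hroot _).1 hv'
    simp [θ_wvert_outer, G.θ_of_not_isRoot v hv] at h
  · simpa [G.θ_of_not_isRoot v hv, G.θ_of_not_isRoot v' hv'] using h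

theorem θ_toFun (s' : T0.State) (p : {w : T0.White // w ≠ o0}) :
    G.θ (s'.toFun p) =
      G.eV (.inr ⟨s'.toFun p, s'.not_root p (not_isOuter_of_ne G.outer_eq_some p.2)⟩) :=
  G.θ_of_not_isRoot _ _

def glueFun (s : T.State) (s' : T0.State) (w : S.White) : S.Vertex :=
  Sum.elim (fun w => G.eV (.inl (s.toFun w))) (fun p => G.θ (s'.toFun p)) (G.eW.symm w)

@[simp]
theorem glueFun_inl (s : T.State) (s' : T0.State) (w : T.White) :
    G.glueFun s s' (G.eW (.inl w)) = G.eV (.inl (s.toFun w)) := by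
  rw [glueFun, Equiv.symm_apply_apply]
  rfl

@[simp]
theorem glueFun_inr (s : T.State) (s' : T0.State) (p : {w : T0.White // w ≠ o0}) :
    G.glueFun s s' (G.eW (.inr p)) = G.θ (s'.toFun p) := by
  rw [glueFun, Equiv.symm_apply_apply]
  rfl

def glue (s : T.State) (s' : T0.State) : S.State where
  toFun := G.glueFun s s'
  incident wS := by
    obtain ⟨w | p, rfl⟩ := G.eW.surjective wS
    · obtain ⟨c, hc⟩ := s.incident w
      exact ⟨c, by simp [hc, wvert_inl]⟩
    · obtain ⟨c, hc⟩ := s'.incident p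
      exact ⟨c, by simp [hc, wvert_inr]⟩
  injOn wS wS' hw hw' h := by
    obtain ⟨w | p, rfl⟩ := G.eW.surjective wS <;>
      obtain ⟨w' | p', rfl⟩ := G.eW.surjective wS'
    · simp only [glueFun_inl, EmbeddingLike.apply_eq_iff_eq, Sum.inl.injEq] at h
      rw [s.injOn w w' (by simpa using hw) (by simpa using hw') h]
    · simp [θ_toFun] at h
    · simp [θ_toFun] at h
    · simp only [glueFun_inr, θ_toFun, EmbeddingLike.apply_eq_iff_eq, Sum.inr.injEq,
        Subtype.mk.injEq] at h
      rw [Subtype.ext (s'.injOn _ _ (not_isOuter_of_ne G.outer_eq_some p.2)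
        (not_isOuter_of_ne G.outer_eq_some p'.2) h)]
  not_root wS hw hroot := by
    obtain ⟨w | p, rfl⟩ := G.eW.surjective wS
    · simp only [glueFun_inl, isRoot_inl_iff] at hroot
      exact s.not_root w (by simpa using hw) hroot
    · simp [θ_toFun] at hroot
  surj v hv := by
    obtain ⟨u | x, rfl⟩ := G.eV.surjective v
    · obtain ⟨w, hw, hs⟩ := s.surj u (by simpa using hv)
      exact ⟨G.eW (.inl w), by simpa using hw, by simp [hs]⟩
    · obtain ⟨w, hw, hs⟩ := s'.surj x x.2
      refine ⟨G.eW (.inr ⟨w, ne_of_not_isOuter G.outer_eq_some hw⟩),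
        G.not_isOuter_inr _, ?_⟩
      rw [glueFun_inr, hs, G.θ_of_not_isRoot x x.2]
  outer_spec wS hwS := by
    obtain ⟨w, hw, rfl⟩ := G.isOuter_iff.1 hwS
    simp [s.outer_spec w hw, wvert_inl]

theorem exists_inr_toFun_eq (σ : S.State) (x : {v : T0.Vertex // ¬ T0.IsRoot v}) :
    ∃ p, σ.toFun (G.eW (.inr p)) = G.eV (.inr x) := by
  obtain ⟨wS, -, hσ⟩ := σ.surj _ (G.not_isRoot_inr x)
  obtain ⟨w | p, rfl⟩ := G.eW.surjective wS
  · obtain ⟨c, hc⟩ := σ.incident (G.eW (.inl w))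
    simp [hc, wvert_inl] at hσ
  · exact ⟨p, hσ⟩

theorem exists_toFun_inr_eq (hT0 : T0.Planar) (σ : S.State) (p : {w : T0.White // w ≠ o0}) :
    ∃ x, σ.toFun (G.eW (.inr p)) = G.eV (.inr x) := by
  choose g hg using G.exists_inr_toFun_eq σ
  have hg_inj : Function.Injective g := fun x y h =>
    Sum.inr_injective (G.eV.injective ((hg x).symm.trans (h ▸ hg y)))
  obtain ⟨x, rfl⟩ := ((Nat.bijective_iff_injective_and_card g).2
    ⟨hg_inj, card_not_isRoot G.outer_eq_some hT0⟩).2 p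
  exact ⟨x, hg x⟩

def restrictTFun (σ : S.State) (w : T.White) : T.Vertex :=
  T.wvert w (S.vcol (σ.toFun (G.eW (.inl w))))

/-- The value at `o0` is the one forced by `State.outer_spec`. -/
def restrictT0Fun (σ : S.State) (w : T0.White) : T0.Vertex :=
  if h : w = o0 then T0.wvert o0 0 else T0.wvert w (S.vcol (σ.toFun (G.eW (.inr ⟨w, h⟩))))

theorem eV_restrictTFun (σ : S.State) (w : T.White) :
    G.eV (.inl (G.restrictTFun σ w)) = σ.toFun (G.eW (.inl w)) := by
  rw [restrictTFun, ← G.wvert_inl, σ.wvert_vcol_toFun]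

theorem θ_restrictT0Fun (σ : S.State) {w : T0.White} (h : w ≠ o0) :
    G.θ (G.restrictT0Fun σ w) = σ.toFun (G.eW (.inr ⟨w, h⟩)) := by
  rw [restrictT0Fun, dif_neg h, ← G.wvert_inr ⟨w, h⟩, σ.wvert_vcol_toFun]

section Restrict

variable (hT0 : T0.Planar)
include hT0

def restrictT (σ : S.State) : T.State where
  toFun := G.restrictTFun σ
  incident _ := ⟨_, rfl⟩
  injOn w w' hw hw' h := by
    have hσ := congrArg (fun u => G.eV (.inl u)) h
    simp only [eV_restrictTFun] at hσ
    simpa using σ.injOn _ _ (by simpa using hw) (by simpa using hw') hσ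
  not_root w hw hroot :=
    σ.not_root (G.eW (.inl w)) (by simpa using hw) (by rwa [← eV_restrictTFun, isRoot_inl_iff])
  surj u hu := by
    obtain ⟨wS, hwS, hσ⟩ := σ.surj (G.eV (.inl u)) (by simpa using hu)
    obtain ⟨w | p, rfl⟩ := G.eW.surjective wS
    · exact ⟨w, by simpa using hwS, by simpa [← eV_restrictTFun] using hσ⟩
    · obtain ⟨x, hx⟩ := G.exists_toFun_inr_eq hT0 σ p
      simp [hx] at hσ
  outer_spec w hw := by
    have hσ := σ.outer_spec _ (G.isOuter_inl_iff.2 hw)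
    rw [← eV_restrictTFun, wvert_inl] at hσ
    simpa using hσ

def restrictT0 (σ : S.State) : T0.State where
  toFun := G.restrictT0Fun σ
  incident w := by
    by_cases h : w = o0
    · exact ⟨0, by rw [restrictT0Fun, dif_pos h, h]⟩
    · exact ⟨_, dif_neg h⟩
  injOn w w' hw hw' h := by
    have hne := ne_of_not_isOuter G.outer_eq_some hw
    have hne' := ne_of_not_isOuter G.outer_eq_some hw'
    have hσ := congrArg G.θ h
    rw [θ_restrictT0Fun _ _ hne, θ_restrictT0Fun _ _ hne'] at hσ
    simpa using σ.injOn _ _ (G.not_isOuter_inr _) (G.not_isOuter_inr _) hσ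
  not_root w hw hroot := by
    have hne := ne_of_not_isOuter G.outer_eq_some hw
    obtain ⟨x, hx⟩ := G.exists_toFun_inr_eq hT0 σ ⟨w, hne⟩
    obtain ⟨c, hc⟩ := (isRoot_iff_exists_wvert G.outer_eq_some).1 hroot
    rw [← θ_restrictT0Fun _ _ hne, hc, θ_wvert_outer] at hx
    simp at hx
  surj v hv := by
    obtain ⟨wS, -, hσ⟩ := σ.surj (G.eV (.inr ⟨v, hv⟩)) (G.not_isRoot_inr _)
    obtain ⟨w | p, rfl⟩ := G.eW.surjective wS
    · simp [← eV_restrictTFun] at hσ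
    · refine ⟨p, not_isOuter_of_ne G.outer_eq_some p.2, G.θ_injective ?_⟩
      rw [θ_restrictT0Fun _ _ p.2, hσ, θ_of_not_isRoot]
  outer_spec w hw := by
    rw [restrictT0Fun, dif_pos ((isOuter_iff_eq G.outer_eq_some).1 hw),
      (isOuter_iff_eq G.outer_eq_some).1 hw]

theorem glue_restrict (σ : S.State) : G.glue (G.restrictT hT0 σ) (G.restrictT0 hT0 σ) = σ := by
  refine State.ext_of_not_isOuter fun wS _ => ?_
  obtain ⟨w | p, rfl⟩ := G.eW.surjective wS
  · exact (G.glueFun_inl _ _ w).trans (G.eV_restrictTFun σ w)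
  · exact (G.glueFun_inr _ _ p).trans (G.θ_restrictT0Fun σ p.2)

theorem restrictT_glue (s : T.State) (s' : T0.State) : G.restrictT hT0 (G.glue s s') = s :=
  State.ext_of_not_isOuter fun w _ => Sum.inl_injective <| G.eV.injective <|
    (G.eV_restrictTFun _ w).trans (G.glueFun_inl s s' w)

theorem restrictT0_glue (s : T.State) (s' : T0.State) : G.restrictT0 hT0 (G.glue s s') = s' :=
  State.ext_of_not_isOuter fun _ hw => G.θ_injective <|
    (G.θ_restrictT0Fun _ (ne_of_not_isOuter G.outer_eq_some hw)).trans (G.glueFun_inr s s' _)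

end Restrict

def stateEquiv (hT0 : T0.Planar) : S.State ≃ T.State × T0.State where
  toFun σ := (G.restrictT hT0 σ, G.restrictT0 hT0 σ)
  invFun p := G.glue p.1 p.2
  left_inv := G.glue_restrict hT0
  right_inv p := Prod.ext (G.restrictT_glue hT0 p.1 p.2) (G.restrictT0_glue hT0 p.1 p.2)

theorem forall_white {P : S.White → Prop} :
    (∀ w, P w) ↔ (∀ w, P (G.eW (.inl w))) ∧ ∀ p, P (G.eW (.inr p)) :=
  G.eW.forall_congr_right.symm.trans Sum.forall

theorem combConfig_inl_iff {V : Fin 3 → T.White} {u : Fin 3 → T.Vertex} :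
    S.CombConfig (fun c => G.eW (.inl (V c))) (fun c => G.eV (.inl (u c))) ↔
      T.CombConfig V u := by
  simp only [CombConfig, wvert_inl, EmbeddingLike.apply_eq_iff_eq, Sum.inl.injEq]

theorem combConfig_inr_iff {V : Fin 3 → {w : T0.White // w ≠ o0}} {u : Fin 3 → T0.Vertex} :
    S.CombConfig (fun c => G.eW (.inr (V c))) (fun c => G.θ (u c)) ↔
      T0.CombConfig (fun c => V c) u := by
  simp only [CombConfig, wvert_inr, G.θ_injective.eq_iff]

theorem cwMoveOn_inl_iff {s t : T.State} {s' t' : T0.State} {V : Fin 3 → T.White}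
    {u : Fin 3 → T.Vertex} :
    S.CWMoveOn (G.glue s s') (G.glue t t') (fun c => G.eW (.inl (V c)))
        (fun c => G.eV (.inl (u c))) ↔ s' = t' ∧ T.CWMoveOn s t V u := by
  unfold CWMoveOn
  rw [combConfig_inl_iff, G.forall_white, eq_comm (a := s'),
    State.ext_iff_of_ne_outer G.outer_eq_some]
  simp only [glue, glueFun_inl, glueFun_inr, isOuter_inl_iff, EmbeddingLike.apply_eq_iff_eq,
    Sum.inl.injEq, G.θ_injective.eq_iff, ne_eq, reduceCtorEq, not_false_eq_true, implies_true,
    true_implies, Subtype.forall]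
  tauto

theorem cwMoveOn_inr_iff {s t : T.State} {s' t' : T0.State}
    {V : Fin 3 → {w : T0.White // w ≠ o0}} {u : Fin 3 → T0.Vertex} :
    S.CWMoveOn (G.glue s s') (G.glue t t') (fun c => G.eW (.inr (V c))) (fun c => G.θ (u c)) ↔
      s = t ∧ T0.CWMoveOn s' t' (fun c => V c) u := by
  have hV c : ¬ T0.IsOuter (V c) := not_isOuter_of_ne G.outer_eq_some (V c).2
  unfold CWMoveOn
  rw [combConfig_inr_iff, G.forall_white, eq_comm (a := s), State.ext_iff,
    State.forall_toFun_eq_iff_of_ne_outer G.outer_eq_some (s := t')]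
  simp only [glue, glueFun_inl, glueFun_inr, not_isOuter_inr, hV,
    EmbeddingLike.apply_eq_iff_eq, Sum.inl.injEq, Sum.inr.injEq, G.θ_injective.eq_iff, ne_eq,
    reduceCtorEq, not_false_eq_true, implies_true, true_implies, Subtype.forall, Subtype.ext_iff]
  tauto

/-- The vertex `u (c + 1)` matched to `W c` lies on `W (c + 2)`; if `W c` comes from `T0`, this
vertex is not a vertex of `T`, so `W (c + 2)` cannot come from `T` either. -/
theorem exists_inr_add_two {s : T.State} {s' : T0.State} {τ : S.State} {W : Fin 3 → S.White}
    {u : Fin 3 → S.Vertex} (h : S.CWMoveOn (G.glue s s') τ W u) {c : Fin 3}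
    (hc : ∃ p, W c = G.eW (.inr p)) : ∃ p, W (c + 2) = G.eW (.inr p) := by
  obtain ⟨p, hp⟩ := hc
  have hu : ∃ x, u (c + 1) = G.eV (.inr x) :=
    ⟨_, (h.2.2.1 c).symm.trans (hp ▸ (G.glueFun_inr s s' p).trans (G.θ_toFun s' p))⟩
  obtain ⟨w | q, hq⟩ := G.eW.surjective (W (c + 2))
  · obtain ⟨x, hx⟩ := hu
    have hvert := h.1 (c + 2) (c + 1) ((by decide : ∀ c : Fin 3, c + 1 ≠ c + 2) c)
    rw [← hq, wvert_inl, hx] at hvert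
    simp at hvert
  · exact ⟨q, hq.symm⟩

theorem cwMoveOn_glue_cases {s : T.State} {s' : T0.State} {τ : S.State} {W : Fin 3 → S.White}
    {u : Fin 3 → S.Vertex} (h : S.CWMoveOn (G.glue s s') τ W u) :
    (∃ (V : Fin 3 → T.White) (u' : Fin 3 → T.Vertex),
        W = (fun c => G.eW (.inl (V c))) ∧ u = fun c => G.eV (.inl (u' c))) ∨
      ∃ (V : Fin 3 → {w : T0.White // w ≠ o0}) (u' : Fin 3 → T0.Vertex),
        W = (fun c => G.eW (.inr (V c))) ∧ u = fun c => G.θ (u' c) := by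
  have hinr (c c') (hc : ∃ p, W c = G.eW (.inr p)) : ∃ p, W c' = G.eW (.inr p) := by
    obtain rfl | rfl | rfl : c' = c ∨ c' = c + 2 ∨ c' = c + 2 + 2 := by
      clear hc; revert c c'; decide
    · exact hc
    · exact G.exists_inr_add_two h hc
    · exact G.exists_inr_add_two h (G.exists_inr_add_two h hc)
  by_cases h0 : ∃ p, W 0 = G.eW (.inr p)
  · choose V hV using fun c => hinr 0 c h0
    refine .inr ⟨V, fun c => T0.wvert (V (c + 1)) c, funext hV, funext fun c => ?_⟩
    rw [h.1.eq_wvert c, hV, wvert_inr]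
  · have hinl (c) : ∃ w, W c = G.eW (.inl w) := by
      obtain ⟨w | p, hw⟩ := G.eW.surjective (W c)
      · exact ⟨w, hw.symm⟩
      · exact absurd (hinr c 0 ⟨p, hw.symm⟩) h0
    choose V hV using hinl
    refine .inl ⟨V, fun c => T.wvert (V (c + 1)) c, funext hV, funext fun c => ?_⟩
    rw [h.1.eq_wvert c, hV, wvert_inl]

theorem cwMove_glue_iff {s t : T.State} {s' t' : T0.State} :
    S.CWMove (G.glue s s') (G.glue t t') ↔
      (s' = t' ∧ T.CWMove s t) ∨ (s = t ∧ T0.CWMove s' t') := by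
  simp only [cwMove_iff_exists_cwMoveOn]
  constructor
  · rintro ⟨W, u, h⟩
    rcases G.cwMoveOn_glue_cases h with ⟨V, u', rfl, rfl⟩ | ⟨V, u', rfl, rfl⟩
    · exact .inl ⟨(G.cwMoveOn_inl_iff.1 h).1, V, u', (G.cwMoveOn_inl_iff.1 h).2⟩
    · exact .inr ⟨(G.cwMoveOn_inr_iff.1 h).1, _, u', (G.cwMoveOn_inr_iff.1 h).2⟩
  · rintro (⟨rfl, V, u, h⟩ | ⟨rfl, V, u, h⟩)
    · exact ⟨_, _, G.cwMoveOn_inl_iff.2 ⟨rfl, h⟩⟩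
    · have hV c : V c ≠ o0 := ne_of_not_isOuter G.outer_eq_some (h.2.1 c)
      exact ⟨_, _, (G.cwMoveOn_inr_iff (V := fun c => ⟨V c, hV c⟩)).2 ⟨rfl, h⟩⟩

theorem cwMove_iff (hT0 : T0.Planar) (σ τ : S.State) :
    S.CWMove σ τ ↔
      ((G.stateEquiv hT0 σ).2 = (G.stateEquiv hT0 τ).2 ∧
          T.CWMove (G.stateEquiv hT0 σ).1 (G.stateEquiv hT0 τ).1) ∨
        ((G.stateEquiv hT0 σ).1 = (G.stateEquiv hT0 τ).1 ∧
          T0.CWMove (G.stateEquiv hT0 σ).2 (G.stateEquiv hT0 τ).2) := by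
  conv_lhs =>
    rw [← (G.stateEquiv hT0).symm_apply_apply σ, ← (G.stateEquiv hT0).symm_apply_apply τ]
  exact G.cwMove_glue_iff

end ConnectedSum

end Trinity

open Trinity in
theorem connectedSum_states_and_moves_general (T T0 S : Trinity)
    (hT0 : T0.Planar)
    (b0 : T.Black) (o0 : T0.White) (ho0 : T0.outer = some o0)
    (eW : T.White ⊕ {w : T0.White // w ≠ o0} ≃ S.White)
    (eV : T.Vertex ⊕ {v : T0.Vertex // ¬ T0.IsRoot v} ≃ S.Vertex)
    (θ : T0.Vertex → S.Vertex)
    (hSouter : S.outer = T.outer.map fun w => eW (Sum.inl w))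
    (hθroot : ∀ c : Fin 3, θ (T0.wvert o0 c) = eV (Sum.inl (T.bvert b0 c)))
    (hθ : ∀ (v : T0.Vertex) (h : ¬ T0.IsRoot v), θ v = eV (Sum.inr ⟨v, h⟩))
    (hwT : ∀ (w : T.White) (c : Fin 3),
      S.wvert (eW (Sum.inl w)) c = eV (Sum.inl (T.wvert w c)))
    (hw0 : ∀ (w : T0.White) (h : w ≠ o0) (c : Fin 3),
      S.wvert (eW (Sum.inr ⟨w, h⟩)) c = θ (T0.wvert w c)) :
    ∃ Φ : S.State ≃ T.State × T0.State,
      (∀ (σ : S.State) (w : T.White),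
        σ.toFun (eW (Sum.inl w)) = eV (Sum.inl ((Φ σ).1.toFun w))) ∧
      (∀ (σ : S.State) (w : T0.White) (h : w ≠ o0),
        σ.toFun (eW (Sum.inr ⟨w, h⟩)) = θ ((Φ σ).2.toFun w)) ∧
      (∀ σ τ : S.State, S.CWMove σ τ ↔
        (((Φ σ).2 = (Φ τ).2 ∧ T.CWMove (Φ σ).1 (Φ τ).1) ∨
         ((Φ σ).1 = (Φ τ).1 ∧ T0.CWMove (Φ σ).2 (Φ τ).2))) := by
  let G : ConnectedSum T T0 S b0 o0 :=
    ⟨eW, eV, θ, ho0, hSouter, hθroot, hθ, hwT, fun p => hw0 p p.2⟩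
  exact ⟨G.stateEquiv hT0, fun σ w => (G.eV_restrictTFun σ w).symm,
    fun σ _ h => (G.θ_restrictT0Fun σ h).symm, G.cwMove_iff hT0⟩

open Trinity in
/-- Theorem 2.4.  Let `T` be a planar or toric trinity, `T0` a
planar trinity with outer triangle `o0`, and let `S` be the connected sum
`T#T0` obtained by gluing `T0` minus its outer triangle into the black triangle
`b0` of `T` (the gluing being encoded by the bijections `eW`, `eV` and the
boundary identification `θ`, which sends the roots of `T0` to the corresponding
vertices of `b0`).  Then the states of `S` are in natural bijection with pairs
of states of `T` and `T0`, and the clockwise moves of `S` correspond exactly to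
clockwise moves performed in either factor.  In particular, the state
transition graph of `T#T0` is the product of those of `T` and `T0`. -/
theorem connectedSum_states_and_moves (T T0 S : Trinity)
    (hT : T.Planar ∨ T.Toric) (hT0 : T0.Planar)
    (b0 : T.Black) (o0 : T0.White) (ho0 : T0.outer = some o0)
    (eW : T.White ⊕ {w : T0.White // w ≠ o0} ≃ S.White)
    (eV : T.Vertex ⊕ {v : T0.Vertex // ¬ T0.IsRoot v} ≃ S.Vertex)
    (θ : T0.Vertex → S.Vertex)
    (hSouter : S.outer = T.outer.map fun w => eW (Sum.inl w))
    (hθroot : ∀ c : Fin 3, θ (T0.wvert o0 c) = eV (Sum.inl (T.bvert b0 c)))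
    (hθ : ∀ (v : T0.Vertex) (h : ¬ T0.IsRoot v), θ v = eV (Sum.inr ⟨v, h⟩))
    (hcolT : ∀ v : T.Vertex, S.vcol (eV (Sum.inl v)) = T.vcol v)
    (hcol0 : ∀ v : T0.Vertex, S.vcol (θ v) = T0.vcol v)
    (hwT : ∀ (w : T.White) (c : Fin 3),
      S.wvert (eW (Sum.inl w)) c = eV (Sum.inl (T.wvert w c)))
    (hw0 : ∀ (w : T0.White) (h : w ≠ o0) (c : Fin 3),
      S.wvert (eW (Sum.inr ⟨w, h⟩)) c = θ (T0.wvert w c)) :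
    ∃ Φ : S.State ≃ T.State × T0.State,
      (∀ (σ : S.State) (w : T.White),
        σ.toFun (eW (Sum.inl w)) = eV (Sum.inl ((Φ σ).1.toFun w))) ∧
      (∀ (σ : S.State) (w : T0.White) (h : w ≠ o0),
        σ.toFun (eW (Sum.inr ⟨w, h⟩)) = θ ((Φ σ).2.toFun w)) ∧
      (∀ σ τ : S.State, S.CWMove σ τ ↔
        (((Φ σ).2 = (Φ τ).2 ∧ T.CWMove (Φ σ).1 (Φ τ).1) ∨
         ((Φ σ).1 = (Φ τ).1 ∧ T0.CWMove (Φ σ).2 (Φ τ).2))) :=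
  connectedSum_states_and_moves_general T T0 S hT0 b0 o0 ho0 eW eV θ hSouter hθroot hθ hwT hw0
end

section
/- In any state of a planar or toric trinity, two clockwise empty black triangles cannot share a vertex; likewise, two counter-clockwise empty black triangles cannot share a vertex. -/
/-!
If two empty black triangles with the same rotation pattern shared a vertex `v`, then `v` would be
matched to a white triangle adjacent to each of them across edges of the same color. A state is
injective on all white triangles, and a white triangle has only one black neighbour across an edge
of a given color, so the two black triangles coincide.
-/

namespace Trinity

theorem badj_left_injective (T : Trinity) (c : Fin 3) : Function.Injective (T.badj · c) :=
  fun b b' h => by simpa only [T.wadj_badj] using congrArg (T.wadj · c) h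

namespace State

variable {T : Trinity}

-- The outer triangle is matched by `outer_spec` to a root, which no other triangle is matched to.
theorem toFun_injective (s : T.State) : Function.Injective s.toFun := by
  intro w w' h
  by_cases hw : T.IsOuter w <;> by_cases hw' : T.IsOuter w'
  · exact Option.some_injective _ (hw.symm.trans hw')
  · exact absurd ⟨w, hw, 0, h.symm.trans (s.outer_spec w hw)⟩ (s.not_root w' hw')
  · exact absurd ⟨w', hw', 0, h.trans (s.outer_spec w' hw')⟩ (s.not_root w hw)
  · exact s.injOn w w' hw hw' h

theorem eq_of_bvert_eq_of_rotation (s : T.State) {b b' : T.Black} (d : Fin 3)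
    (hb : ∀ c, s.toFun (T.badj b c) = T.bvert b (c + d))
    (hb' : ∀ c, s.toFun (T.badj b' c) = T.bvert b' (c + d))
    {c c' : Fin 3} (hv : T.bvert b c = T.bvert b' c') : b = b' := by
  obtain rfl : c = c' := by simpa only [T.bvert_col] using congrArg T.vcol hv
  have hmatch : s.toFun (T.badj b (c - d)) = s.toFun (T.badj b' (c - d)) := by
    rw [hb, hb', sub_add_cancel, hv]
  exact T.badj_left_injective (c - d) (s.toFun_injective hmatch)

end State

end Trinity

theorem clockwise_empty_black_triangles_do_not_share_vertices_general
    (T : Trinity) (s : T.State)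
    (b b' : T.Black) (hne : b ≠ b') :
    (s.IsCW b → s.IsCW b' → ∀ c c' : Fin 3, T.bvert b c ≠ T.bvert b' c') ∧
    (s.IsCCW b → s.IsCCW b' → ∀ c c' : Fin 3, T.bvert b c ≠ T.bvert b' c') :=
  ⟨fun h h' _ _ hv => hne (s.eq_of_bvert_eq_of_rotation 1 h.2 h'.2 hv),
    fun h h' _ _ hv => hne (s.eq_of_bvert_eq_of_rotation 2 h.2 h'.2 hv)⟩

/-- Lemma 2.5.  In any state of a planar or toric trinity,
two clockwise empty black triangles cannot share a vertex; likewise, two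
counter-clockwise empty black triangles cannot share a vertex. -/
theorem clockwise_empty_black_triangles_do_not_share_vertices
    (T : Trinity) (hpt : T.Planar ∨ T.Toric) (s : T.State)
    (b b' : T.Black) (hne : b ≠ b') :
    (s.IsCW b → s.IsCW b' → ∀ c c' : Fin 3, T.bvert b c ≠ T.bvert b' c') ∧
    (s.IsCCW b → s.IsCCW b' → ∀ c c' : Fin 3, T.bvert b c ≠ T.bvert b' c') :=
  clockwise_empty_black_triangles_do_not_share_vertices_general T s b b' hne
end

section
/- For any pair of clockwise (respectively counter-clockwise) empty black triangles in a given state of a planar or toric trinity, changing one of them to counter-clockwise (respectively clockwise) leaves the other one still empty with its original orientation; furthermore, changing both triangles results in the same state regardless of the order in which the two changes are performed. -/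
/-! Two distinct black triangles empty with the same orientation border disjoint triples
of white triangles: the colour of the vertex matched with a white triangle tells across
which of its edges the black triangle lies. Changing one of them thus rematches only
white triangles the other does not border, and a new arrow could only pass through the
other black triangle if the two shared a white triangle. -/

namespace Trinity

variable {T : Trinity}

theorem State.toFun_injective_s2 : Function.Injective (State.toFun (T := T)) := by
  rintro ⟨⟩ ⟨⟩ rfl
  rfl

def State.Rotates (s : T.State) (b : T.Black) (k : Fin 3) : Prop :=
  ∀ c, s.toFun (T.badj b c) = T.bvert b (c + k)

theorem State.badj_ne_badj {s : T.State} {b b' : T.Black} {k : Fin 3} (hne : b ≠ b')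
    (hb : s.Rotates b k) (hb' : s.Rotates b' k) (c c' : Fin 3) :
    T.badj b c ≠ T.badj b' c' := by
  intro heq
  have hcc : c = c' := by
    have := congrArg T.vcol ((hb c).symm.trans (heq ▸ hb' c'))
    simpa only [T.bvert_col, add_left_inj] using this
  subst hcc
  exact hne (by rw [← T.wadj_badj b c, heq, T.wadj_badj])

variable (T) in
structure Rematch (s t : T.State) (b : T.Black) (k j : Fin 3) : Prop where
  rotates_source : s.Rotates b k
  rotates_target : t.Rotates b j
  eq_off : ∀ w, (∀ c, w ≠ T.badj b c) → t.toFun w = s.toFun w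

namespace Rematch

variable {s t : T.State} {b b' : T.Black} {k j : Fin 3}

theorem of_cwMoveAt (h : T.CWMoveAt s t b) : T.Rematch s t b 1 2 :=
  ⟨h.1.2, h.2.1, h.2.2⟩

theorem of_cwMoveAt_rev (h : T.CWMoveAt t s b) : T.Rematch s t b 2 1 :=
  ⟨h.2.1, h.1.2, fun w hw => (h.2.2 w hw).symm⟩

theorem rotates_of_ne (h : T.Rematch s t b k j) (hne : b ≠ b') (hs : s.Rotates b' k) :
    t.Rotates b' k := fun c =>
  (h.eq_off _ fun c' heq => State.badj_ne_badj hne h.rotates_source hs c' c heq.symm).trans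
    (hs c)

theorem emptyAt_of_ne (h : T.Rematch s t b k j) (hne : b ≠ b') (hs : s.Rotates b' k)
    (hempty : s.EmptyAt b') : t.EmptyAt b' := by
  intro w hw hwb
  by_cases haround : ∃ c, w = T.badj b c
  · obtain ⟨c, rfl⟩ := haround
    have hcross : T.wadj (T.badj b c) (c + j) = b' := by
      rwa [State.arrowBlack, h.rotates_target c, T.bvert_col] at hwb
    refine State.badj_ne_badj hne h.rotates_source hs c (c + j) ?_
    rw [← hcross, T.badj_wadj]
  · push Not at haround
    exact hempty w hw (by rwa [State.arrowBlack, ← h.eq_off w haround])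

theorem comm {t₁ t₂ u₁ u₂ : T.State} (hne : b ≠ b')
    (h₁ : T.Rematch s t₁ b k j) (h₁' : T.Rematch t₁ u₁ b' k j)
    (h₂ : T.Rematch s t₂ b' k j) (h₂' : T.Rematch t₂ u₂ b k j) : u₁ = u₂ := by
  have hdisj := State.badj_ne_badj hne h₁.rotates_source h₂.rotates_source
  refine State.toFun_injective_s2 (funext fun w => ?_)
  by_cases haround : ∃ c, w = T.badj b c
  · obtain ⟨c, rfl⟩ := haround
    rw [h₁'.eq_off _ fun c' => hdisj c c', h₁.rotates_target c, h₂'.rotates_target c]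
  by_cases haround' : ∃ c, w = T.badj b' c
  · obtain ⟨c, rfl⟩ := haround'
    rw [h₁'.rotates_target c, h₂'.eq_off _ fun c' heq => hdisj c' c heq.symm,
      h₂.rotates_target c]
  push Not at haround haround'
  rw [h₁'.eq_off w haround', h₁.eq_off w haround, h₂'.eq_off w haround, h₂.eq_off w haround']

end Rematch

end Trinity

theorem changing_empty_black_triangles_commutes_general
    (T : Trinity) (s : T.State)
    (b b' : T.Black) (hne : b ≠ b') :
    (∀ t, s.IsCW b → s.IsCW b' → T.CWMoveAt s t b → t.IsCW b') ∧
    (∀ t, s.IsCCW b → s.IsCCW b' → T.CWMoveAt t s b → t.IsCCW b') ∧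
    (∀ t₁ t₂ u₁ u₂, s.IsCW b → s.IsCW b' →
      T.CWMoveAt s t₁ b → T.CWMoveAt t₁ u₁ b' →
      T.CWMoveAt s t₂ b' → T.CWMoveAt t₂ u₂ b → u₁ = u₂) ∧
    (∀ t₁ t₂ u₁ u₂, s.IsCCW b → s.IsCCW b' →
      T.CWMoveAt t₁ s b → T.CWMoveAt u₁ t₁ b' →
      T.CWMoveAt t₂ s b' → T.CWMoveAt u₂ t₂ b → u₁ = u₂) := by
  refine ⟨fun t _ hs' hmove => ?_, fun t _ hs' hmove => ?_, ?_, ?_⟩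
  · have h : T.Rematch s t b 1 2 := .of_cwMoveAt hmove
    exact ⟨h.emptyAt_of_ne hne hs'.2 hs'.1, h.rotates_of_ne hne hs'.2⟩
  · have h : T.Rematch s t b 2 1 := .of_cwMoveAt_rev hmove
    exact ⟨h.emptyAt_of_ne hne hs'.2 hs'.1, h.rotates_of_ne hne hs'.2⟩
  · intro _ _ _ _ _ _ h₁ h₁' h₂ h₂'
    exact Trinity.Rematch.comm hne (.of_cwMoveAt h₁) (.of_cwMoveAt h₁') (.of_cwMoveAt h₂)
      (.of_cwMoveAt h₂')
  · intro _ _ _ _ _ _ h₁ h₁' h₂ h₂'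
    exact Trinity.Rematch.comm hne (.of_cwMoveAt_rev h₁) (.of_cwMoveAt_rev h₁')
      (.of_cwMoveAt_rev h₂) (.of_cwMoveAt_rev h₂')

/-- Lemma 2.6.  For any pair of clockwise (respectively
counter-clockwise) empty black triangles in a given state, changing one of them
to counter-clockwise (respectively clockwise) leaves the other one still empty
with its original orientation; furthermore, changing both triangles results in
the same state regardless of the order in which the two changes are
performed. -/
theorem changing_empty_black_triangles_commutes
    (T : Trinity) (hpt : T.Planar ∨ T.Toric) (s : T.State)
    (b b' : T.Black) (hne : b ≠ b') :
    (∀ t, s.IsCW b → s.IsCW b' → T.CWMoveAt s t b → t.IsCW b') ∧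
    (∀ t, s.IsCCW b → s.IsCCW b' → T.CWMoveAt t s b → t.IsCCW b') ∧
    (∀ t₁ t₂ u₁ u₂, s.IsCW b → s.IsCW b' →
      T.CWMoveAt s t₁ b → T.CWMoveAt t₁ u₁ b' →
      T.CWMoveAt s t₂ b' → T.CWMoveAt t₂ u₂ b → u₁ = u₂) ∧
    (∀ t₁ t₂ u₁ u₂, s.IsCCW b → s.IsCCW b' →
      T.CWMoveAt t₁ s b → T.CWMoveAt u₁ t₁ b' →
      T.CWMoveAt t₂ s b' → T.CWMoveAt u₂ t₂ b → u₁ = u₂) :=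
  changing_empty_black_triangles_commutes_general T s b b' hne
end

section
/- Suppose a path in the state transition graph of a planar or toric trinity contains a clockwise (counter-clockwise) move performed immediately after a counter-clockwise (clockwise) move. Then the order of these two moves can be swapped without changing any other states or moves along the path; in particular, the starting and ending states of the path remain the same. -/
/-! Two moves about distinct black triangles `b₁ ≠ b₂` that meet at a common state in
opposite directions touch disjoint sets of white triangles: at the common state both
triangles carry the same rotational pattern, and a white triangle adjacent to both
would be matched to vertices of two different colors.  Away from these triangles
the states agree, so the matching around `b₂` can be rotated independently of the
one around `b₁`, which fills in the fourth corner of the commuting square. -/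

namespace Trinity

variable {T : Trinity}

lemma eq_of_bvert_eq {b : T.Black} {k k' : Fin 3} (h : T.bvert b k = T.bvert b k') : k = k' := by
  simpa only [T.bvert_col] using congrArg T.vcol h

lemma bvert_eq_wvert_badj (b : T.Black) {c k : Fin 3} (h : k ≠ c) :
    T.bvert b k = T.wvert (T.badj b c) k := by
  rw [← T.bvert_wadj _ _ _ h, T.wadj_badj]

def cycleVertices (b : T.Black) (k : Fin 3) : Equiv.Perm T.Vertex where
  toFun v := if v = T.bvert b (T.vcol v) then T.bvert b (T.vcol v + k) else v
  invFun v := if v = T.bvert b (T.vcol v) then T.bvert b (T.vcol v - k) else v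
  left_inv v := by
    by_cases hv : v = T.bvert b (T.vcol v)
    · simp only [if_pos hv, T.bvert_col, if_true, add_sub_cancel_right]
      exact hv.symm
    · simp only [if_neg hv]
  right_inv v := by
    by_cases hv : v = T.bvert b (T.vcol v)
    · simp only [if_pos hv, T.bvert_col, if_true, sub_add_cancel]
      exact hv.symm
    · simp only [if_neg hv]

lemma cycleVertices_bvert (b : T.Black) (k j : Fin 3) :
    cycleVertices b k (T.bvert b j) = T.bvert b (j + k) := by
  simp [cycleVertices, T.bvert_col]

lemma cycleVertices_apply_of_ne {b : T.Black} {k : Fin 3} {v : T.Vertex}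
    (hv : ∀ j, v ≠ T.bvert b j) : cycleVertices b k v = v := by
  simp [cycleVertices, hv]

namespace State

def permute (s : T.State) (π : Equiv.Perm T.Vertex)
    (hinc : ∀ w, ∃ c, π (s.toFun w) = T.wvert w c) (hroot : ∀ v, T.IsRoot v → π v = v) :
    T.State where
  toFun := π ∘ s.toFun
  incident := hinc
  injOn w w' hw hw' h := s.injOn w w' hw hw' (π.injective h)
  not_root w hw hr := s.not_root w hw (π.injective (hroot _ hr) ▸ hr)
  surj v hv := by
    have hv' : ¬ T.IsRoot (π.symm v) := fun hr => by
      have := hroot _ hr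
      rw [Equiv.apply_symm_apply] at this
      exact hv (this ▸ hr)
    obtain ⟨w, hw, hwv⟩ := s.surj _ hv'
    exact ⟨w, hw, by simp [hwv]⟩
  outer_spec w hw := by
    change π (s.toFun w) = _
    rw [s.outer_spec w hw]
    exact hroot _ ⟨w, hw, 0, rfl⟩

lemma emptyAt_of_toFun_badj {s : T.State} {b : T.Black} {δ : Fin 3} (hδ : δ ≠ 0)
    (hpat : ∀ c, s.toFun (T.badj b c) = T.bvert b (c + δ)) : s.EmptyAt b := by
  intro w _ harr
  have hw : T.badj b (T.vcol (s.toFun w)) = w := by rw [← harr, arrowBlack, T.badj_wadj]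
  have hcol := congrArg T.vcol (hpat (T.vcol (s.toFun w)))
  rw [hw, T.bvert_col] at hcol
  exact hδ (by simpa using hcol)

lemma exists_rotate (s : T.State) {b : T.Black} {δ : Fin 3} (δ' : Fin 3) (hδ' : δ' ≠ 0)
    (hout : ∀ c, ¬ T.IsOuter (T.badj b c))
    (hpat : ∀ c, s.toFun (T.badj b c) = T.bvert b (c + δ)) :
    ∃ t : T.State, (∀ c, t.toFun (T.badj b c) = T.bvert b (c + δ')) ∧
      ∀ x, (∀ c, x ≠ T.badj b c) → t.toFun x = s.toFun x := by
  set π := cycleVertices b (δ' - δ)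
  have hbvert : ∀ j, ¬ T.IsRoot (T.bvert b j) := fun j => by
    simpa only [hpat, sub_add_cancel] using s.not_root _ (hout (j - δ))
  have hroot : ∀ v, T.IsRoot v → π v = v := fun v hv =>
    cycleVertices_apply_of_ne fun j hj => hbvert j (hj ▸ hv)
  have hfix : ∀ x, (∀ c, x ≠ T.badj b c) → π (s.toFun x) = s.toFun x := by
    refine fun x hx => cycleVertices_apply_of_ne fun j hj => hx (j - δ) ?_
    by_cases hxo : T.IsOuter x
    · exact absurd (hj ▸ ⟨x, hxo, 0, s.outer_spec x hxo⟩) (hbvert j)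
    · exact s.injOn _ _ hxo (hout _) (by rw [hj, hpat, sub_add_cancel])
  have hbadj : ∀ c, π (s.toFun (T.badj b c)) = T.bvert b (c + δ') := fun c => by
    rw [hpat, cycleVertices_bvert, add_assoc, add_sub_cancel]
  refine ⟨s.permute π (fun x => ?_) hroot, hbadj, hfix⟩
  by_cases hx : ∃ c, x = T.badj b c
  · obtain ⟨c, rfl⟩ := hx
    have hne : c + δ' ≠ c := by simpa using hδ'
    exact ⟨c + δ', by rw [hbadj, bvert_eq_wvert_badj b hne]⟩
  · push Not at hx
    simpa only [hfix x hx] using s.incident x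

lemma badj_ne_badj_s3 (s : T.State) {b₁ b₂ : T.Black} {δ : Fin 3} (hne : b₁ ≠ b₂)
    (h₁ : ∀ c, s.toFun (T.badj b₁ c) = T.bvert b₁ (c + δ))
    (h₂ : ∀ c, s.toFun (T.badj b₂ c) = T.bvert b₂ (c + δ)) (c c' : Fin 3) :
    T.badj b₁ c ≠ T.badj b₂ c' := by
  intro h
  have hcol := congrArg T.vcol ((h₁ c).symm.trans (h ▸ h₂ c'))
  rw [T.bvert_col, T.bvert_col, add_left_inj] at hcol
  subst hcol
  exact hne (by rw [← T.wadj_badj b₁ c, h, T.wadj_badj])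

end State

lemma cwMoveAt_of_toFun_badj {s t : T.State} {b : T.Black}
    (hs : ∀ c, s.toFun (T.badj b c) = T.bvert b (c + 1))
    (ht : ∀ c, t.toFun (T.badj b c) = T.bvert b (c + 2))
    (hoff : ∀ x, (∀ c, x ≠ T.badj b c) → t.toFun x = s.toFun x) : T.CWMoveAt s t b :=
  ⟨⟨State.emptyAt_of_toFun_badj (by decide) hs, hs⟩, ht, hoff⟩

namespace CWMoveAt

lemma not_isOuter {s t : T.State} {b : T.Black} (h : T.CWMoveAt s t b) (c : Fin 3) :
    ¬ T.IsOuter (T.badj b c) := fun ho => by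
  have hst : T.bvert b (c + 1) = T.bvert b (c + 2) := by
    rw [← h.1.2, ← h.2.1, s.outer_spec _ ho, t.outer_spec _ ho]
  exact absurd (add_left_cancel (eq_of_bvert_eq hst)) (by decide)

lemma of_eq_outside {s t s' t' : T.State} {b b' : T.Black} (h : T.CWMoveAt s t b)
    (hdisj : ∀ c c', T.badj b c ≠ T.badj b' c')
    (hs : ∀ x, (∀ c, x ≠ T.badj b' c) → s'.toFun x = s.toFun x)
    (ht : ∀ x, (∀ c, x ≠ T.badj b' c) → t'.toFun x = t.toFun x)
    (hb' : ∀ c, s'.toFun (T.badj b' c) = t'.toFun (T.badj b' c)) :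
    T.CWMoveAt s' t' b := by
  obtain ⟨⟨_, hs₁⟩, ht₂, hoff⟩ := h
  refine cwMoveAt_of_toFun_badj (fun c => ?_) (fun c => ?_) fun x hx => ?_
  · rw [hs _ (hdisj c), hs₁]
  · rw [ht _ (hdisj c), ht₂]
  · by_cases hx' : ∃ c, x = T.badj b' c
    · obtain ⟨c, rfl⟩ := hx'
      exact (hb' c).symm
    · push Not at hx'
      rw [hs x hx', ht x hx', hoff x hx]

lemma exists_common_source {s u v : T.State} {b₁ b₂ : T.Black} (hne : b₁ ≠ b₂)
    (m₁ : T.CWMoveAt s u b₁) (m₂ : T.CWMoveAt v u b₂) :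
    ∃ w, T.CWMoveAt w s b₂ ∧ T.CWMoveAt w v b₁ := by
  have hdisj := u.badj_ne_badj_s3 hne m₁.2.1 m₂.2.1
  have hs : ∀ c, s.toFun (T.badj b₂ c) = T.bvert b₂ (c + 2) := fun c => by
    rw [← m₁.2.2 _ fun c' h => hdisj c' c h.symm, m₂.2.1]
  obtain ⟨w, hw, hoff⟩ := s.exists_rotate 1 (by decide) m₂.not_isOuter hs
  refine ⟨w, cwMoveAt_of_toFun_badj hw hs fun x hx => (hoff x hx).symm, ?_⟩
  exact m₁.of_eq_outside hdisj hoff (fun x hx => (m₂.2.2 x hx).symm) fun c => by rw [hw, m₂.1.2]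

lemma exists_common_target {s u v : T.State} {b₁ b₂ : T.Black} (hne : b₁ ≠ b₂)
    (m₁ : T.CWMoveAt u s b₁) (m₂ : T.CWMoveAt u v b₂) :
    ∃ w, T.CWMoveAt s w b₂ ∧ T.CWMoveAt v w b₁ := by
  have hdisj := u.badj_ne_badj_s3 hne m₁.1.2 m₂.1.2
  have hs : ∀ c, s.toFun (T.badj b₂ c) = T.bvert b₂ (c + 1) := fun c => by
    rw [m₁.2.2 _ fun c' h => hdisj c' c h.symm, m₂.1.2]
  obtain ⟨w, hw, hoff⟩ := s.exists_rotate 2 (by decide) m₂.not_isOuter hs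
  refine ⟨w, cwMoveAt_of_toFun_badj hs hw hoff, ?_⟩
  exact m₁.of_eq_outside hdisj m₂.2.2 hoff fun c => by rw [hw, m₂.2.1]

end CWMoveAt

namespace Walk

lemma append_iff {s t : T.State} {l₁ l₂ : List (T.Black × Bool)} :
    T.Walk s (l₁ ++ l₂) t ↔ ∃ u, T.Walk s l₁ u ∧ T.Walk u l₂ t := by
  induction l₁ generalizing s with
  | nil => exact ⟨fun h => ⟨s, .nil s, h⟩, fun ⟨_, .nil _, h⟩ => h⟩
  | cons p l ih =>
    constructor
    · intro h
      cases h with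
      | cw m h =>
        obtain ⟨u, h₁, h₂⟩ := ih.1 h
        exact ⟨u, .cw m h₁, h₂⟩
      | ccw m h =>
        obtain ⟨u, h₁, h₂⟩ := ih.1 h
        exact ⟨u, .ccw m h₁, h₂⟩
    · rintro ⟨u, h₁, h₂⟩
      cases h₁ with
      | cw m h₁ => exact .cw m (ih.2 ⟨u, h₁, h₂⟩)
      | ccw m h₁ => exact .ccw m (ih.2 ⟨u, h₁, h₂⟩)

lemma swap_opposite_head {s t : T.State} {b₁ b₂ : T.Black} {d : Bool}
    {l : List (T.Black × Bool)} (hne : b₁ ≠ b₂)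
    (h : T.Walk s ((b₁, d) :: (b₂, !d) :: l) t) : T.Walk s ((b₂, !d) :: (b₁, d) :: l) t := by
  cases d with
  | true =>
    cases h with | cw m₁ h => cases h with | ccw m₂ h =>
    obtain ⟨w, m₂', m₁'⟩ := m₁.exists_common_source hne m₂
    exact .ccw m₂' (.cw m₁' h)
  | false =>
    cases h with | ccw m₁ h => cases h with | cw m₂ h =>
    obtain ⟨w, m₂', m₁'⟩ := m₁.exists_common_target hne m₂
    exact .cw m₂' (.ccw m₁' h)

end Walk

end Trinity

theorem swap_adjacent_opposite_moves_general
    (T : Trinity) (s t : T.State)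
    (l₁ l₂ : List (T.Black × Bool)) (b₁ b₂ : T.Black) (d : Bool) (hne : b₁ ≠ b₂)
    (h : T.Walk s (l₁ ++ (b₁, d) :: (b₂, !d) :: l₂) t) :
    T.Walk s (l₁ ++ (b₂, !d) :: (b₁, d) :: l₂) t := by
  obtain ⟨u, h₁, h₂⟩ := Trinity.Walk.append_iff.1 h
  exact Trinity.Walk.append_iff.2 ⟨u, h₁, h₂.swap_opposite_head hne⟩

/-- Lemma 2.7.  Suppose a path in the state transition graph
of a planar or toric trinity contains a clockwise (counter-clockwise) move
performed immediately after a counter-clockwise (clockwise) move (the two moves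
being about distinct black triangles; `d = true` stands for clockwise).  Then
the order of these two moves can be swapped without changing any other states
or moves along the path; in particular, the starting and ending states of the
path remain the same. -/
theorem swap_adjacent_opposite_moves
    (T : Trinity) (hpt : T.Planar ∨ T.Toric) (s t : T.State)
    (l₁ l₂ : List (T.Black × Bool)) (b₁ b₂ : T.Black) (d : Bool) (hne : b₁ ≠ b₂)
    (h : T.Walk s (l₁ ++ (b₁, d) :: (b₂, !d) :: l₂) t) :
    T.Walk s (l₁ ++ (b₂, !d) :: (b₁, d) :: l₂) t :=
  swap_adjacent_opposite_moves_general T s t l₁ l₂ b₁ b₂ d hne h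
end

section
/- When a given starting state of a planar or toric trinity is changed through a series of clockwise and counter-clockwise clock moves, the same ending state results as long as the same moves, with the same algebraic multiplicities on each black triangle, are performed in any allowable order. -/
/- Each white triangle `w` is matched with one of its vertices, which is determined by its color.
A clockwise move about a black triangle adjacent to `w` advances that color by one (mod 3), a
counter-clockwise move sets it back by one, and no other move changes it. Hence at the end of a
walk the color matched at `w` is the initial one shifted by the sum of the algebraic
multiplicities of the black triangles around `w`, and this determines the final state. -/

namespace Trinity

variable {T : Trinity}

def algMult (l : List (T.Black × Bool)) (b : T.Black) : ℤ :=
  l.count (b, true) - l.count (b, false)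

lemma algMult_nil (b : T.Black) : algMult [] b = 0 := by
  simp [algMult]

lemma algMult_cons_true (l : List (T.Black × Bool)) (b b' : T.Black) :
    algMult ((b, true) :: l) b' = algMult l b' + if b' = b then 1 else 0 := by
  rcases eq_or_ne b' b with rfl | h
  · simp [algMult]
    ring
  · simp [algMult, h, h.symm]

lemma algMult_cons_false (l : List (T.Black × Bool)) (b b' : T.Black) :
    algMult ((b, false) :: l) b' = algMult l b' - if b' = b then 1 else 0 := by
  rcases eq_or_ne b' b with rfl | h
  · simp [algMult]
    ring
  · simp [algMult, h, h.symm]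

variable (T) in
def adjBlacks (w : T.White) : Finset T.Black :=
  Finset.univ.image (T.wadj w)

lemma mem_adjBlacks {w : T.White} {b : T.Black} : b ∈ T.adjBlacks w ↔ ∃ c, T.wadj w c = b := by
  simp [adjBlacks]

namespace State

lemma toFun_eq_wvert_vcol (s : T.State) (w : T.White) :
    s.toFun w = T.wvert w (T.vcol (s.toFun w)) := by
  obtain ⟨c, hc⟩ := s.incident w
  rw [hc, T.wvert_col]

lemma eq_of_vcol_eq {s t : T.State} (h : ∀ w, T.vcol (s.toFun w) = T.vcol (t.toFun w)) :
    s = t := by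
  have hfun : s.toFun = t.toFun := funext fun w => by
    rw [toFun_eq_wvert_vcol s, toFun_eq_wvert_vcol t, h]
  cases s; cases t; cases hfun; rfl

end State

open scoped Fin.CommRing

lemma vcol_toFun_of_cwMoveAt {s t : T.State} {b : T.Black} (h : T.CWMoveAt s t b)
    (w : T.White) :
    T.vcol (t.toFun w) = T.vcol (s.toFun w) + if b ∈ T.adjBlacks w then 1 else 0 := by
  obtain ⟨⟨-, hs⟩, ht, hkeep⟩ := h
  by_cases hadj : ∃ c, T.wadj w c = b
  · obtain ⟨c, rfl⟩ := hadj
    rw [if_pos (mem_adjBlacks.2 ⟨c, rfl⟩), ← T.badj_wadj w c, hs, ht, T.bvert_col, T.bvert_col]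
    ring
  · have hw : ∀ c, w ≠ T.badj b c := by
      rintro c rfl
      exact hadj ⟨c, T.wadj_badj b c⟩
    rw [if_neg (mt mem_adjBlacks.1 hadj), hkeep w hw, add_zero]

lemma vcol_toFun_of_walk {s t : T.State} {l : List (T.Black × Bool)} (h : T.Walk s l t)
    (w : T.White) :
    T.vcol (t.toFun w) =
      T.vcol (s.toFun w) + ((∑ b ∈ T.adjBlacks w, algMult l b : ℤ) : Fin 3) := by
  induction h with
  | nil => simp [algMult_nil]
  | @cw _ _ _ b l hmove _ ih =>
    simp only [ih, vcol_toFun_of_cwMoveAt hmove w, algMult_cons_true, Finset.sum_add_distrib,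
      Finset.sum_ite_eq']
    split_ifs <;> push_cast <;> ring
  | @ccw _ _ _ b l hmove _ ih =>
    simp only [ih, vcol_toFun_of_cwMoveAt hmove w, algMult_cons_false, Finset.sum_sub_distrib,
      Finset.sum_ite_eq']
    split_ifs <;> push_cast <;> ring

end Trinity

theorem walks_with_equal_multiplicities_have_equal_endpoints_general
    (T : Trinity) (s t₁ t₂ : T.State)
    (l₁ l₂ : List (T.Black × Bool)) (h₁ : T.Walk s l₁ t₁) (h₂ : T.Walk s l₂ t₂)
    (hmult : ∀ b : T.Black,
      (l₁.count (b, true) : ℤ) - (l₁.count (b, false) : ℤ) =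
      (l₂.count (b, true) : ℤ) - (l₂.count (b, false) : ℤ)) :
    t₁ = t₂ := by
  have halgMult : Trinity.algMult l₁ = Trinity.algMult l₂ := funext hmult
  refine Trinity.State.eq_of_vcol_eq fun w => ?_
  rw [Trinity.vcol_toFun_of_walk h₁, Trinity.vcol_toFun_of_walk h₂, halgMult]

/-- Lemma 3.1.  When a given starting state of a planar or
toric trinity is changed through a series of clockwise and counter-clockwise
clock moves, the same ending state results as long as the same moves, with the
same algebraic multiplicities on each black triangle, are performed in any
allowable order. -/
theorem walks_with_equal_multiplicities_have_equal_endpoints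
    (T : Trinity) (hpt : T.Planar ∨ T.Toric) (s t₁ t₂ : T.State)
    (l₁ l₂ : List (T.Black × Bool)) (h₁ : T.Walk s l₁ t₁) (h₂ : T.Walk s l₂ t₂)
    (hmult : ∀ b : T.Black,
      (l₁.count (b, true) : ℤ) - (l₁.count (b, false) : ℤ) =
      (l₂.count (b, true) : ℤ) - (l₂.count (b, false) : ℤ)) :
    t₁ = t₂ :=
  walks_with_equal_multiplicities_have_equal_endpoints_general T s t₁ t₂ l₁ l₂ h₁ h₂ hmult
end
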